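/- arXiv:1710.06296 — 2 statements merged into one kernel-verified Lean document; each statement's English description precedes it below -/
import Mathlib

section
/- Let a_j, b_j, c be bounded functions on ℝ^d and let φ : ℝ^d → ℝ be smooth with all derivatives bounded. Define (S(t)φ)(x) = (1/(4d)) Σ_{j=1}^d [ φ(x + 2√d a_j(x)√t e_j) + φ(x − 2√d a_j(x)√t e_j) ] + (1/2) φ(x + 2t b(x)) + t c(x) φ(x), and (Hφ)(x) = Σ_{j=1}^d a_j(x)² φ''_{x_j x_j}(x) + ⟨b(x), ∇φ(x)⟩ + c(x)φ(x). Then lim_{t→0⁺} sup_x |(S(t)φ)(x) − φ(x) − t(Hφ)(x)| / t = 0. -/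
/-- The translation-family operator S(t) of the paper (formula (2)). -/
noncomputable def Sop {d : ℕ} (a : Fin d → EuclideanSpace ℝ (Fin d) → ℝ)
    (b : EuclideanSpace ℝ (Fin d) → EuclideanSpace ℝ (Fin d))
    (c : EuclideanSpace ℝ (Fin d) → ℝ) (t : ℝ)
    (f : EuclideanSpace ℝ (Fin d) → ℝ) (x : EuclideanSpace ℝ (Fin d)) : ℝ :=
  (1 / (4 * (d : ℝ))) * ∑ j : Fin d,
      (f (x + (2 * Real.sqrt d * a j x * Real.sqrt t) • EuclideanSpace.single j (1 : ℝ))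
        + f (x - (2 * Real.sqrt d * a j x * Real.sqrt t) • EuclideanSpace.single j (1 : ℝ)))
    + (1 / 2) * f (x + (2 * t) • b x) + t * c x * f x

/-- The differential operator H of the paper (formula (3)); the second partial
derivative in direction e_j is expressed via iterated directional derivatives. -/
noncomputable def Hop {d : ℕ} (a : Fin d → EuclideanSpace ℝ (Fin d) → ℝ)
    (b : EuclideanSpace ℝ (Fin d) → EuclideanSpace ℝ (Fin d))
    (c : EuclideanSpace ℝ (Fin d) → ℝ)
    (φ : EuclideanSpace ℝ (Fin d) → ℝ) (x : EuclideanSpace ℝ (Fin d)) : ℝ :=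
  (∑ j : Fin d, (a j x) ^ 2 *
      fderiv ℝ (fun y => fderiv ℝ φ y (EuclideanSpace.single j (1 : ℝ))) x
        (EuclideanSpace.single j (1 : ℝ)))
    + fderiv ℝ φ x (b x) + c x * φ x

section aux
variable {E : Type*} [NormedAddCommGroup E] [NormedSpace ℝ E]
variable {F : Type*} [NormedAddCommGroup F] [NormedSpace ℝ F]

lemma my_mvt (f : E → F) (hf : Differentiable ℝ f) {C : ℝ}
    (hC : ∀ y, ‖fderiv ℝ f y‖ ≤ C) (x y : E) : ‖f y - f x‖ ≤ C * ‖y - x‖ :=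
  (convex_univ).norm_image_sub_le_of_norm_hasFDerivWithin_le
    (fun z _ => (hf z).hasFDerivAt.hasFDerivWithinAt)
    (fun z _ => hC z) (Set.mem_univ x) (Set.mem_univ y)

lemma my_taylor1 (f : E → F) (hf : Differentiable ℝ f)
    (hf' : Differentiable ℝ (fderiv ℝ f)) {C : ℝ}
    (hC : ∀ y, ‖fderiv ℝ (fderiv ℝ f) y‖ ≤ C) (x v : E) :
    ‖f (x + v) - f x - fderiv ℝ f x v‖ ≤ C * ‖v‖ ^ 2 := by
  have hC0 : 0 ≤ C := (norm_nonneg (fderiv ℝ (fderiv ℝ f) x)).trans (hC x)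
  have hlip : ∀ z, ‖fderiv ℝ f z - fderiv ℝ f x‖ ≤ C * ‖z - x‖ :=
    fun z => my_mvt (fderiv ℝ f) hf' hC x z
  have hmem : x + v ∈ Metric.closedBall x ‖v‖ := by
    simp [Metric.mem_closedBall, dist_eq_norm]
  have := (convex_closedBall x ‖v‖).norm_image_sub_le_of_norm_hasFDerivWithin_le'
    (f' := fderiv ℝ f) (φ := fderiv ℝ f x) (C := C * ‖v‖)
    (fun z _ => (hf z).hasFDerivAt.hasFDerivWithinAt)
    (fun z hz => (hlip z).trans (mul_le_mul_of_nonneg_left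
      (by simpa [Metric.mem_closedBall, dist_eq_norm] using hz) hC0))
    (Metric.mem_closedBall_self (norm_nonneg v)) hmem
  simpa [add_sub_cancel_left, pow_two, mul_assoc] using this

lemma my_norm_fd2F (g : E → F) (y : E) :
    ‖fderiv ℝ (fderiv ℝ g) y‖ = ‖iteratedFDeriv ℝ 2 g y‖ := by
  calc ‖fderiv ℝ (fderiv ℝ g) y‖
      = ‖iteratedFDeriv ℝ 0 (fderiv ℝ (fderiv ℝ g)) y‖ :=
        (norm_iteratedFDeriv_zero (f := fderiv ℝ (fderiv ℝ g)) (x := y)).symm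
    _ = ‖iteratedFDeriv ℝ 1 (fderiv ℝ g) y‖ := norm_iteratedFDeriv_fderiv
    _ = ‖iteratedFDeriv ℝ 2 g y‖ := norm_iteratedFDeriv_fderiv

lemma my_taylor2 (f : E → ℝ) (hf : ContDiff ℝ (⊤ : ℕ∞) f) {C : ℝ}
    (hC : ∀ y, ‖iteratedFDeriv ℝ 3 f y‖ ≤ C) (x v : E) :
    |f (x + v) - f x - fderiv ℝ f x v
      - (1/2) * fderiv ℝ (fderiv ℝ f) x v v| ≤ C * ‖v‖ ^ 3 := by
  have hC0 : 0 ≤ C := (norm_nonneg _).trans (hC x)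
  set f' := fderiv ℝ f with hf'def
  set f'' := fderiv ℝ f' with hf''def
  have hdf : Differentiable ℝ f := hf.differentiable (by simp)
  have hcf' : ContDiff ℝ (⊤ : ℕ∞) f' := hf.fderiv_right (by simp)
  have hdf' : Differentiable ℝ f' := hcf'.differentiable (by simp)
  have hcf'' : ContDiff ℝ (⊤ : ℕ∞) f'' := hcf'.fderiv_right (by simp)
  have hdf'' : Differentiable ℝ f'' := hcf''.differentiable (by simp)
  have hsymm : ∀ p q : E, f'' x p q = f'' x q p :=
    second_derivative_symmetric (fun y => (hdf y).hasFDerivAt) (hdf' x).hasFDerivAt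
  set G : E → ℝ := fun w => f (x + w) - f' x w - (1/2) * f'' x w w with hGdef
  have hG : ∀ w : E, HasFDerivAt G (f' (x + w) - f' x - f'' x w) w := by
    intro w
    have h1 : HasFDerivAt (fun w : E => f (x + w)) (f' (x + w)) w := by
      have := (hdf (x + w)).hasFDerivAt.comp w ((hasFDerivAt_id w).const_add x)
      exact this
    have h2 : HasFDerivAt (fun w : E => f' x w) (f' x) w := (f' x).hasFDerivAt
    have h3 : HasFDerivAt (fun w : E => f'' x w w)
        ((f'' x w).comp (ContinuousLinearMap.id ℝ E) + (f'' x).flip w) w :=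
      (f'' x).hasFDerivAt.clm_apply (hasFDerivAt_id w)
    have h4 := (h1.sub h2).sub ((h3.const_mul (1/2 : ℝ)))
    refine HasFDerivAt.congr_fderiv h4 ?_
    ext e
    have := hsymm e w
    simp only [ContinuousLinearMap.coe_sub', Pi.sub_apply, ContinuousLinearMap.add_apply,
      ContinuousLinearMap.coe_comp', Function.comp_apply, ContinuousLinearMap.coe_id',
      id_eq, ContinuousLinearMap.flip_apply, ContinuousLinearMap.smul_apply,
      smul_eq_mul]
    rw [this]
    ring
  have hbound : ∀ w ∈ Metric.closedBall (0 : E) ‖v‖,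
      ‖f' (x + w) - f' x - f'' x w‖ ≤ C * ‖v‖ ^ 2 := by
    intro w hw
    have hw' : ‖w‖ ≤ ‖v‖ := by simpa [Metric.mem_closedBall, dist_eq_norm] using hw
    exact (my_taylor1 f' hdf' hdf'' (fun y => (my_norm_fd2F f' y).trans_le
      ((norm_iteratedFDeriv_fderiv (n := 2)).trans_le (hC y))) x w).trans (by gcongr)
  have key := (convex_closedBall (0 : E) ‖v‖).norm_image_sub_le_of_norm_hasFDerivWithin_le
    (fun w _ => (hG w).hasFDerivWithinAt) hbound
    (Metric.mem_closedBall_self (norm_nonneg v))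
    (by simp [Metric.mem_closedBall, dist_eq_norm] : v ∈ Metric.closedBall (0 : E) ‖v‖)
  have hG0 : G 0 = f x := by simp [hGdef]
  have hkey : ‖G v - G 0‖ ≤ C * ‖v‖ ^ 2 * ‖v - 0‖ := key
  rw [hG0] at hkey
  simp only [sub_zero] at hkey
  calc |f (x + v) - f x - f' x v - (1/2) * f'' x v v|
      = ‖G v - f x‖ := by rw [hGdef]; congr 1; ring
    _ ≤ C * ‖v‖ ^ 2 * ‖v‖ := hkey
    _ = C * ‖v‖ ^ 3 := by ring

lemma my_taylor2sym (f : E → ℝ) (hf : ContDiff ℝ (⊤ : ℕ∞) f) {C : ℝ}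
    (hC : ∀ y, ‖iteratedFDeriv ℝ 3 f y‖ ≤ C) (x v : E) :
    |f (x + v) + f (x - v) - 2 * f x - fderiv ℝ (fderiv ℝ f) x v v|
      ≤ 2 * C * ‖v‖ ^ 3 := by
  have h1 := my_taylor2 f hf hC x v
  have h2 := my_taylor2 f hf hC x (-v)
  rw [norm_neg] at h2
  have heq : f (x + v) + f (x - v) - 2 * f x - fderiv ℝ (fderiv ℝ f) x v v
      = (f (x + v) - f x - fderiv ℝ f x v - (1/2) * fderiv ℝ (fderiv ℝ f) x v v)
        + (f (x + (-v)) - f x - fderiv ℝ f x (-v)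
            - (1/2) * fderiv ℝ (fderiv ℝ f) x (-v) (-v)) := by
    simp only [map_neg, ContinuousLinearMap.neg_apply, sub_neg_eq_add]
    rw [show x + (-v) = x - v by abel]
    ring
  rw [heq]
  calc |_ + _| ≤ _ + _ := abs_add_le _ _
    _ ≤ C * ‖v‖ ^ 3 + C * ‖v‖ ^ 3 := add_le_add h1 h2
    _ = 2 * C * ‖v‖ ^ 3 := by ring

lemma my_norm_fd2 (f : E → ℝ) (y : E) :
    ‖fderiv ℝ (fderiv ℝ f) y‖ = ‖iteratedFDeriv ℝ 2 f y‖ := by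
  calc ‖fderiv ℝ (fderiv ℝ f) y‖
      = ‖iteratedFDeriv ℝ 0 (fderiv ℝ (fderiv ℝ f)) y‖ :=
        (norm_iteratedFDeriv_zero (f := fderiv ℝ (fderiv ℝ f)) (x := y)).symm
    _ = ‖iteratedFDeriv ℝ 1 (fderiv ℝ f) y‖ := norm_iteratedFDeriv_fderiv
    _ = ‖iteratedFDeriv ℝ 2 f y‖ := norm_iteratedFDeriv_fderiv

end aux

set_option maxHeartbeats 1000000 in
/-- Chernoff tangency of S(t) to H on smooth functions with all
derivatives bounded: sup_x |S(t)φ(x) − φ(x) − t Hφ(x)| = o(t) as t → 0⁺. -/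
theorem stmt10 (d : ℕ) (hd : 0 < d)
    (a : Fin d → EuclideanSpace ℝ (Fin d) → ℝ)
    (b : EuclideanSpace ℝ (Fin d) → EuclideanSpace ℝ (Fin d))
    (c : EuclideanSpace ℝ (Fin d) → ℝ)
    (ha : ∀ j, ∃ M, ∀ x, |a j x| ≤ M) (hb : ∃ M, ∀ x, ‖b x‖ ≤ M)
    (hc : ∃ M, ∀ x, |c x| ≤ M)
    (φ : EuclideanSpace ℝ (Fin d) → ℝ) (hφ : ContDiff ℝ (⊤ : ℕ∞) φ)
    (hφbd : ∀ n : ℕ, ∃ C, ∀ x, ‖iteratedFDeriv ℝ n φ x‖ ≤ C)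
    (ε : ℝ) (hε : 0 < ε) :
    ∃ τ > 0, ∀ t : ℝ, 0 < t → t < τ → ∀ x,
      |Sop a b c t φ x - φ x - t * Hop a b c φ x| ≤ ε * t := by
  classical
  choose Ma hMa using ha
  obtain ⟨Mb, hMb⟩ := hb
  obtain ⟨C2, hC2i⟩ := hφbd 2
  obtain ⟨C3, hC3i⟩ := hφbd 3
  have hd0 : (0:ℝ) < (d:ℝ) := by exact_mod_cast hd
  have hC2 : ∀ y, ‖fderiv ℝ (fderiv ℝ φ) y‖ ≤ C2 := fun y => (my_norm_fd2 φ y) ▸ hC2i y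
  have hC3 : ∀ y, ‖iteratedFDeriv ℝ 3 φ y‖ ≤ C3 := hC3i
  have hC20 : 0 ≤ C2 := (norm_nonneg (fderiv ℝ (fderiv ℝ φ) 0)).trans (hC2 0)
  have hC30 : 0 ≤ C3 := (norm_nonneg _).trans (hC3 0)
  have hMa0 : ∀ j, 0 ≤ Ma j := fun j => (abs_nonneg _).trans (hMa j 0)
  have hMb0 : 0 ≤ Mb := (norm_nonneg _).trans (hMb 0)
  have hdf : Differentiable ℝ φ := hφ.differentiable (by simp)
  have hcf' : ContDiff ℝ (⊤ : ℕ∞) (fderiv ℝ φ) := hφ.fderiv_right (by simp)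
  have hdf' : Differentiable ℝ (fderiv ℝ φ) := hcf'.differentiable (by simp)
  set SK : ℝ := ∑ j : Fin d, 2 * C3 * (2 * Real.sqrt d * Ma j) ^ 3 with hSKdef
  have hSK0 : 0 ≤ SK := Finset.sum_nonneg fun j _ =>
    mul_nonneg (by positivity)
      (pow_nonneg (mul_nonneg (by positivity) (hMa0 j)) 3)
  set K1 : ℝ := (1 / (4 * (d:ℝ))) * SK with hK1def
  set K2 : ℝ := 2 * C2 * Mb ^ 2 with hK2def
  have hK10 : 0 ≤ K1 := by positivity
  have hK20 : 0 ≤ K2 := by positivity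
  set δ : ℝ := ε / (K1 + K2 + 1) with hδdef
  have hδ0 : 0 < δ := by positivity
  refine ⟨min 1 (δ ^ 2), by positivity, ?_⟩
  intro t ht htτ x
  have ht1 : t < 1 := lt_of_lt_of_le htτ (min_le_left _ _)
  have htδ2 : t < δ ^ 2 := lt_of_lt_of_le htτ (min_le_right _ _)
  have hst : Real.sqrt t ≤ δ := by
    rw [show δ = Real.sqrt (δ ^ 2) by rw [Real.sqrt_sq hδ0.le]]
    exact Real.sqrt_le_sqrt htδ2.le
  have htle : t ≤ Real.sqrt t := by
    nlinarith [Real.sq_sqrt ht.le, Real.sqrt_nonneg t, sq_nonneg (Real.sqrt t - 1),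
      sq_nonneg (Real.sqrt t + 1)]
  -- abbreviations
  set u : Fin d → EuclideanSpace ℝ (Fin d) := fun j => EuclideanSpace.single j (1 : ℝ)
    with hudef
  set h : Fin d → ℝ := fun j => 2 * Real.sqrt d * a j x * Real.sqrt t with hhdef
  set f'' := fderiv ℝ (fderiv ℝ φ) with hf''def
  have hQ : ∀ j, fderiv ℝ (fun y => fderiv ℝ φ y (u j)) x (u j) = f'' x (u j) (u j) := by
    intro j
    rw [fderiv_clm_apply (hdf' x) (differentiableAt_const _)]
    simp
    rfl
  have hsm : ∀ j, f'' x (h j • u j) (h j • u j)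
      = (4 * (d:ℝ) * t) * ((a j x) ^ 2 * f'' x (u j) (u j)) := by
    intro j
    simp only [map_smul, ContinuousLinearMap.smul_apply, smul_eq_mul, hhdef]
    have h1 : Real.sqrt d * Real.sqrt d = (d:ℝ) := Real.mul_self_sqrt (by positivity)
    have h2 : Real.sqrt t * Real.sqrt t = t := Real.mul_self_sqrt ht.le
    linear_combination (4 * (a j x) ^ 2 * (((f'' x) (u j)) (u j))
        * (Real.sqrt t * Real.sqrt t)) * h1
      + (4 * (a j x) ^ 2 * (((f'' x) (u j)) (u j)) * (d:ℝ)) * h2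
  have hlin : fderiv ℝ φ x ((2 * t) • b x) = 2 * t * fderiv ℝ φ x (b x) := by
    rw [map_smul]; simp
  -- the master algebraic identity
  have master : Sop a b c t φ x - φ x - t * Hop a b c φ x
      = (1 / (4 * (d:ℝ))) * ∑ j : Fin d,
          (φ (x + h j • u j) + φ (x - h j • u j) - 2 * φ x - f'' x (h j • u j) (h j • u j))
        + (1 / 2) * (φ (x + (2 * t) • b x) - φ x - fderiv ℝ φ x ((2 * t) • b x)) := by
    simp only [Sop, Hop, hQ, hlin, ← hudef, ← hhdef]
    rw [Finset.sum_sub_distrib, Finset.sum_sub_distrib, Finset.sum_const,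
      Finset.card_univ, Fintype.card_fin]
    rw [show (∑ j : Fin d, f'' x (h j • u j) (h j • u j))
        = (4 * (d:ℝ) * t) * ∑ j : Fin d, (a j x) ^ 2 * f'' x (u j) (u j) by
      rw [Finset.mul_sum]; exact Finset.sum_congr rfl fun j _ => hsm j]
    rw [nsmul_eq_mul]
    simp only [hudef, hhdef] at hQ ⊢
    simp only [hQ]
    field_simp
    ring_nf
    have e : ∀ j : Fin d, Real.sqrt d * Real.sqrt t * a j x * 2
        = Real.sqrt d * a j x * Real.sqrt t * 2 := fun j => by ring
    simp only [e]
    ring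
  rw [master]
  -- bounds
  have hTj : ∀ j, |φ (x + h j • u j) + φ (x - h j • u j) - 2 * φ x
      - f'' x (h j • u j) (h j • u j)| ≤ 2 * C3 * (2 * Real.sqrt d * Ma j) ^ 3
        * (t * Real.sqrt t) := by
    intro j
    have hnorm : ‖h j • u j‖ = |h j| := by
      rw [norm_smul, hudef]
      simp [EuclideanSpace.norm_single, Real.norm_eq_abs]
    have habs : |h j| ≤ 2 * Real.sqrt d * Ma j * Real.sqrt t := by
      rw [hhdef]
      have : |2 * Real.sqrt d * a j x * Real.sqrt t|
          = 2 * Real.sqrt d * |a j x| * Real.sqrt t := by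
        rw [abs_mul, abs_mul, abs_mul]
        simp [abs_of_nonneg, Real.sqrt_nonneg]
      rw [this]
      have := hMa j x
      gcongr
    refine (my_taylor2sym φ hφ hC3 x (h j • u j)).trans ?_
    rw [hnorm]
    have hst3 : Real.sqrt t ^ 3 = t * Real.sqrt t := by
      rw [pow_succ, Real.sq_sqrt ht.le]
    calc 2 * C3 * |h j| ^ 3 ≤ 2 * C3 * (2 * Real.sqrt d * Ma j * Real.sqrt t) ^ 3 := by
          gcongr
      _ = 2 * C3 * (2 * Real.sqrt d * Ma j) ^ 3 * (Real.sqrt t ^ 3) := by ring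
      _ = 2 * C3 * (2 * Real.sqrt d * Ma j) ^ 3 * (t * Real.sqrt t) := by rw [hst3]
  have hRb : |φ (x + (2 * t) • b x) - φ x - fderiv ℝ φ x ((2 * t) • b x)|
      ≤ C2 * (2 * t * Mb) ^ 2 := by
    have h0 := my_taylor1 φ hdf hdf' hC2 x ((2 * t) • b x)
    have hn : ‖(2 * t) • b x‖ ≤ 2 * t * Mb := by
      rw [norm_smul, Real.norm_eq_abs, abs_of_pos (by linarith)]
      exact mul_le_mul_of_nonneg_left (hMb x) (by positivity)
    calc |φ (x + (2 * t) • b x) - φ x - fderiv ℝ φ x ((2 * t) • b x)|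
        ≤ C2 * ‖(2 * t) • b x‖ ^ 2 := by simpa [Real.norm_eq_abs] using h0
      _ ≤ C2 * (2 * t * Mb) ^ 2 :=
          mul_le_mul_of_nonneg_left (pow_le_pow_left₀ (norm_nonneg _) hn 2) hC20
  have hsum : |∑ j : Fin d, (φ (x + h j • u j) + φ (x - h j • u j) - 2 * φ x
      - f'' x (h j • u j) (h j • u j))| ≤ SK * (t * Real.sqrt t) := by
    refine (Finset.abs_sum_le_sum_abs _ _).trans ?_
    rw [hSKdef, Finset.sum_mul]
    exact Finset.sum_le_sum fun j _ => hTj j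
  have htd : t ≤ δ := htle.trans hst
  have hfin : (K1 + K2) * δ ≤ ε := by
    rw [hδdef, ← mul_div_assoc, div_le_iff₀ (by positivity)]
    nlinarith
  calc |(1 / (4 * (d:ℝ))) * ∑ j : Fin d, (φ (x + h j • u j) + φ (x - h j • u j)
        - 2 * φ x - f'' x (h j • u j) (h j • u j))
      + (1 / 2) * (φ (x + (2 * t) • b x) - φ x - fderiv ℝ φ x ((2 * t) • b x))|
      ≤ |(1 / (4 * (d:ℝ))) * ∑ j : Fin d, (φ (x + h j • u j) + φ (x - h j • u j)
          - 2 * φ x - f'' x (h j • u j) (h j • u j))|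
        + |(1 / 2) * (φ (x + (2 * t) • b x) - φ x
          - fderiv ℝ φ x ((2 * t) • b x))| := abs_add_le _ _
    _ ≤ (1 / (4 * (d:ℝ))) * (SK * (t * Real.sqrt t))
        + (1 / 2) * (C2 * (2 * t * Mb) ^ 2) := by
        rw [abs_mul, abs_mul, abs_of_pos (by positivity : (0:ℝ) < 1 / (4 * (d:ℝ))),
          abs_of_pos (by norm_num : (0:ℝ) < (1:ℝ)/2)]
        gcongr
    _ = K1 * (t * Real.sqrt t) + K2 * (t * t) := by rw [hK1def, hK2def]; ring
    _ ≤ K1 * (t * δ) + K2 * (t * δ) := by gcongr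
    _ = (K1 + K2) * δ * t := by ring
    _ ≤ ε * t := mul_le_mul_of_nonneg_right hfin ht.le
end

section
/- Let a_j, b_j, c : ℝ^d → ℝ be bounded and f : ℝ^d → ℝ be bounded and uniformly continuous. If t_n ≥ 0 and t_n → t_0, then sup_x |(S(t_n)f)(x) − (S(t_0)f)(x)| → 0 as n → ∞, where S(t) is the translation-family operator (S(t)f)(x) = (1/(4d)) Σ_{j=1}^d [ f(x + 2√d a_j(x)√t e_j) + f(x − 2√d a_j(x)√t e_j) ] + (1/2) f(x + 2t b(x)) + t c(x) f(x). -/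
/-- strong continuity in t of the family S(t) on bounded uniformly
continuous f: if t_n ≥ 0, t_n → t_0, then S(t_n)f → S(t_0)f uniformly. -/
theorem stmt11 (d : ℕ) (hd : 0 < d)
    (a : Fin d → EuclideanSpace ℝ (Fin d) → ℝ)
    (b : EuclideanSpace ℝ (Fin d) → EuclideanSpace ℝ (Fin d))
    (c : EuclideanSpace ℝ (Fin d) → ℝ)
    (ha : ∀ j, ∃ M, ∀ x, |a j x| ≤ M) (hb : ∃ M, ∀ x, ‖b x‖ ≤ M)
    (hc : ∃ M, ∀ x, |c x| ≤ M)
    (f : EuclideanSpace ℝ (Fin d) → ℝ)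
    (hf_uc : UniformContinuous f) (hf_bd : ∃ M, ∀ x, |f x| ≤ M)
    (tseq : ℕ → ℝ) (t0 : ℝ) (htn : ∀ n, 0 ≤ tseq n) (ht0 : 0 ≤ t0)
    (hlim : Filter.Tendsto tseq Filter.atTop (nhds t0)) :
    TendstoUniformly (fun n x => Sop a b c (tseq n) f x) (Sop a b c t0 f)
      Filter.atTop := by
  classical
  obtain ⟨Ma, hMa0, hMa⟩ : ∃ A, 0 ≤ A ∧ ∀ j x, |a j x| ≤ A := by
    choose M hM using ha
    refine ⟨∑ j, |M j|, Finset.sum_nonneg (fun j _ => abs_nonneg _), fun j x => ?_⟩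
    calc |a j x| ≤ M j := hM j x
      _ ≤ |M j| := le_abs_self _
      _ ≤ ∑ i, |M i| := Finset.single_le_sum (f := fun i => |M i|) (fun i _ => abs_nonneg _) (Finset.mem_univ j)
  obtain ⟨Mb, hMb⟩ := hb
  have hMb0 : 0 ≤ Mb := le_trans (norm_nonneg _) (hMb 0)
  obtain ⟨Mc, hMc⟩ := hc
  obtain ⟨Mf, hMf⟩ := hf_bd
  have hMc0 : 0 ≤ Mc := le_trans (abs_nonneg _) (hMc 0)
  have hMf0 : 0 ≤ Mf := le_trans (abs_nonneg _) (hMf 0)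
  have hd0 : (0:ℝ) < (d:ℝ) := by exact_mod_cast hd
  have hsd : (0:ℝ) ≤ Real.sqrt d := Real.sqrt_nonneg _
  rw [Metric.tendstoUniformly_iff]
  intro ε hε
  obtain ⟨δ, hδ, hδf⟩ := Metric.uniformContinuous_iff.mp hf_uc (ε/4) (by positivity)
  have key : ∀ y z : EuclideanSpace ℝ (Fin d), ‖y - z‖ < δ → |f y - f z| < ε/4 := by
    intro y z h
    have := hδf (a := y) (b := z) (by rwa [dist_eq_norm])
    rwa [Real.dist_eq] at this
  have hsq : Filter.Tendsto (fun n => Real.sqrt (tseq n)) Filter.atTop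
      (nhds (Real.sqrt t0)) := hlim.sqrt
  have E1 : ∀ᶠ n in Filter.atTop,
      |Real.sqrt (tseq n) - Real.sqrt t0| < δ / (2 * Real.sqrt d * Ma + 1) := by
    have := Metric.tendsto_nhds.mp hsq (δ / (2 * Real.sqrt d * Ma + 1)) (by positivity)
    simpa [Real.dist_eq] using this
  have E2 : ∀ᶠ n in Filter.atTop, |tseq n - t0| < δ / (2 * Mb + 1) := by
    have := Metric.tendsto_nhds.mp hlim _ (show 0 < δ / (2*Mb+1) by positivity)
    simpa [Real.dist_eq] using this
  have E3 : ∀ᶠ n in Filter.atTop, |tseq n - t0| < ε / (4 * (Mc * Mf + 1)) := by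
    have := Metric.tendsto_nhds.mp hlim _ (show 0 < ε / (4*(Mc*Mf+1)) by positivity)
    simpa [Real.dist_eq] using this
  filter_upwards [E1, E2, E3] with n h1 h2 h3
  intro x
  rw [Real.dist_eq]
  simp only [Sop]
  set s0 := Real.sqrt t0 with hs0
  set sn := Real.sqrt (tseq n) with hsn
  -- per-coordinate estimates
  have hscale : ∀ j : Fin d,
      |2 * Real.sqrt d * a j x * s0 - 2 * Real.sqrt d * a j x * sn| < δ := by
    intro j
    have h1' : |sn - s0| * (2 * Real.sqrt d * Ma + 1) < δ :=
      (lt_div_iff₀ (by positivity)).mp h1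
    calc |2 * Real.sqrt d * a j x * s0 - 2 * Real.sqrt d * a j x * sn|
        = (2 * Real.sqrt d * |a j x|) * |s0 - sn| := by
          rw [show 2 * Real.sqrt d * a j x * s0 - 2 * Real.sqrt d * a j x * sn
            = (2 * Real.sqrt d * a j x) * (s0 - sn) by ring, abs_mul, abs_mul, abs_mul,
            abs_two, abs_of_nonneg hsd]
      _ ≤ (2 * Real.sqrt d * Ma + 1) * |s0 - sn| := by
          refine mul_le_mul_of_nonneg_right ?_ (abs_nonneg _)
          have := mul_le_mul_of_nonneg_left (hMa j x)
            (by positivity : (0:ℝ) ≤ 2 * Real.sqrt d)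
          linarith
      _ = |sn - s0| * (2 * Real.sqrt d * Ma + 1) := by rw [abs_sub_comm]; ring
      _ < δ := h1'
  have hplus : ∀ j : Fin d,
      |f (x + (2 * Real.sqrt d * a j x * s0) • EuclideanSpace.single j (1:ℝ))
        - f (x + (2 * Real.sqrt d * a j x * sn) • EuclideanSpace.single j (1:ℝ))| < ε/4 := by
    intro j
    refine key _ _ ?_
    have heq : (x + (2 * Real.sqrt d * a j x * s0) • EuclideanSpace.single j (1:ℝ))
        - (x + (2 * Real.sqrt d * a j x * sn) • EuclideanSpace.single j (1:ℝ))
        = (2 * Real.sqrt d * a j x * s0 - 2 * Real.sqrt d * a j x * sn)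
            • EuclideanSpace.single j (1:ℝ) := by
      rw [sub_smul]; abel
    rw [heq, norm_smul, EuclideanSpace.norm_single, norm_one, mul_one, Real.norm_eq_abs]
    exact hscale j
  have hminus : ∀ j : Fin d,
      |f (x - (2 * Real.sqrt d * a j x * s0) • EuclideanSpace.single j (1:ℝ))
        - f (x - (2 * Real.sqrt d * a j x * sn) • EuclideanSpace.single j (1:ℝ))| < ε/4 := by
    intro j
    refine key _ _ ?_
    have heq : (x - (2 * Real.sqrt d * a j x * s0) • EuclideanSpace.single j (1:ℝ))
        - (x - (2 * Real.sqrt d * a j x * sn) • EuclideanSpace.single j (1:ℝ))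
        = (2 * Real.sqrt d * a j x * sn - 2 * Real.sqrt d * a j x * s0)
            • EuclideanSpace.single j (1:ℝ) := by
      rw [sub_smul]; abel
    rw [heq, norm_smul, EuclideanSpace.norm_single, norm_one, mul_one, Real.norm_eq_abs,
      abs_sub_comm]
    exact hscale j
  -- the drift term
  have hbterm : |f (x + (2 * t0) • b x) - f (x + (2 * tseq n) • b x)| < ε/4 := by
    refine key _ _ ?_
    have heq : (x + (2 * t0) • b x) - (x + (2 * tseq n) • b x)
        = (2 * t0 - 2 * tseq n) • b x := by rw [sub_smul]; abel
    rw [heq, norm_smul, Real.norm_eq_abs]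
    have h2' : |tseq n - t0| * (2 * Mb + 1) < δ := (lt_div_iff₀ (by positivity)).mp h2
    calc |2 * t0 - 2 * tseq n| * ‖b x‖ ≤ (2 * |tseq n - t0|) * Mb := by
          have hb' := hMb x
          have : |2 * t0 - 2 * tseq n| = 2 * |tseq n - t0| := by
            rw [show 2 * t0 - 2 * tseq n = -(2 * (tseq n - t0)) by ring, abs_neg, abs_mul,
              abs_two]
          rw [this]
          exact mul_le_mul_of_nonneg_left hb' (by positivity)
      _ ≤ |tseq n - t0| * (2 * Mb + 1) := by nlinarith [abs_nonneg (tseq n - t0)]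
      _ < δ := h2'
  -- the zero-order term
  have hcterm : |t0 - tseq n| * |c x * f x| < ε/4 := by
    have h3' : |tseq n - t0| * (4 * (Mc * Mf + 1)) < ε := (lt_div_iff₀ (by positivity)).mp h3
    have hcf : |c x * f x| ≤ Mc * Mf := by
      rw [abs_mul]
      exact mul_le_mul (hMc x) (hMf x) (abs_nonneg _) hMc0
    rw [abs_sub_comm]
    nlinarith [abs_nonneg (tseq n - t0), abs_nonneg (c x * f x)]
  -- sum estimate
  have hsum : |(∑ j : Fin d,
        (f (x + (2 * Real.sqrt d * a j x * s0) • EuclideanSpace.single j (1:ℝ))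
          + f (x - (2 * Real.sqrt d * a j x * s0) • EuclideanSpace.single j (1:ℝ))))
      - (∑ j : Fin d,
        (f (x + (2 * Real.sqrt d * a j x * sn) • EuclideanSpace.single j (1:ℝ))
          + f (x - (2 * Real.sqrt d * a j x * sn) • EuclideanSpace.single j (1:ℝ))))|
      ≤ (d : ℝ) * (ε/2) := by
    rw [← Finset.sum_sub_distrib]
    calc |∑ j : Fin d, _| ≤ ∑ j : Fin d, |(f (x + (2 * Real.sqrt d * a j x * s0) • EuclideanSpace.single j (1:ℝ))
          + f (x - (2 * Real.sqrt d * a j x * s0) • EuclideanSpace.single j (1:ℝ)))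
        - (f (x + (2 * Real.sqrt d * a j x * sn) • EuclideanSpace.single j (1:ℝ))
          + f (x - (2 * Real.sqrt d * a j x * sn) • EuclideanSpace.single j (1:ℝ)))| :=
        Finset.abs_sum_le_sum_abs _ _
      _ ≤ ∑ _j : Fin d, (ε/2) := by
          refine Finset.sum_le_sum fun j _ => ?_
          have hp := hplus j
          have hm := hminus j
          calc |_| ≤ |f (x + (2 * Real.sqrt d * a j x * s0) • EuclideanSpace.single j (1:ℝ))
                - f (x + (2 * Real.sqrt d * a j x * sn) • EuclideanSpace.single j (1:ℝ))|
              + |f (x - (2 * Real.sqrt d * a j x * s0) • EuclideanSpace.single j (1:ℝ))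
                - f (x - (2 * Real.sqrt d * a j x * sn) • EuclideanSpace.single j (1:ℝ))| := by
                apply le_of_eq_of_le (congrArg abs (by ring)) (abs_add_le _ _)
            _ ≤ ε/2 := by linarith
      _ = (d : ℝ) * (ε/2) := by
          rw [Finset.sum_const, Finset.card_univ, Fintype.card_fin, nsmul_eq_mul]
  -- assemble
  set P0 := ∑ j : Fin d,
      (f (x + (2 * Real.sqrt d * a j x * s0) • EuclideanSpace.single j (1:ℝ))
        + f (x - (2 * Real.sqrt d * a j x * s0) • EuclideanSpace.single j (1:ℝ))) with hP0
  set Pn := ∑ j : Fin d,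
      (f (x + (2 * Real.sqrt d * a j x * sn) • EuclideanSpace.single j (1:ℝ))
        + f (x - (2 * Real.sqrt d * a j x * sn) • EuclideanSpace.single j (1:ℝ))) with hPn
  have hC : (1 / (4 * (d:ℝ))) * ((d:ℝ) * (ε/2)) = ε/8 := by
    field_simp
    ring
  have b1 : (1 / (4 * (d:ℝ))) * |P0 - Pn| ≤ ε/8 := by
    rw [← hC]
    exact mul_le_mul_of_nonneg_left hsum (by positivity)
  calc |((1 / (4 * (d:ℝ))) * P0 + (1/2) * f (x + (2 * t0) • b x) + t0 * c x * f x)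
        - ((1 / (4 * (d:ℝ))) * Pn + (1/2) * f (x + (2 * tseq n) • b x) + tseq n * c x * f x)|
      = |(1 / (4 * (d:ℝ))) * (P0 - Pn)
          + (1/2) * (f (x + (2 * t0) • b x) - f (x + (2 * tseq n) • b x))
          + (t0 - tseq n) * (c x * f x)| := by ring_nf
    _ ≤ |(1 / (4 * (d:ℝ))) * (P0 - Pn)|
          + |(1/2) * (f (x + (2 * t0) • b x) - f (x + (2 * tseq n) • b x))|
          + |(t0 - tseq n) * (c x * f x)| := abs_add_three _ _ _
    _ = (1 / (4 * (d:ℝ))) * |P0 - Pn|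
          + (1/2) * |f (x + (2 * t0) • b x) - f (x + (2 * tseq n) • b x)|
          + |t0 - tseq n| * |c x * f x| := by
        rw [abs_mul, abs_mul, abs_mul, abs_of_nonneg (by positivity : (0:ℝ) ≤ 1 / (4 * (d:ℝ))),
          abs_of_nonneg (by norm_num : (0:ℝ) ≤ (1:ℝ)/2)]
    _ < ε := by linarith
end
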